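/- Let (σ_i)_{i∈Π} be a secure equilibrium in a multiplayer quantitative reachability game (G, v₀), with outcome ρ. Then there exists a dev-optimal secure equilibrium (τ_i)_{i∈Π} in (G, v₀) with the same outcome ρ. -/

import Mathlib

open scoped Classical ENat

/-- A multiplayer quantitative reachability game: a finite directed graph whose
vertices are partitioned among the players (via `owner`), every vertex has an
outgoing edge, and each player `i` has a nonempty goal set `F i`. -/
structure QRGame (ι V : Type) where
  owner : V → ι
  E : V → V → Prop
  total : ∀ v, ∃ w, E v w
  F : ι → Set V
  F_ne : ∀ i, (F i).Nonempty

namespace QRGame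

variable {ι V : Type}

/-- Histories are encoded as *reversed* nonempty lists: the head is the current
vertex, the last element is the initial vertex `v₀`, and consecutive elements
are joined by edges of the graph. -/
def IsHist (G : QRGame ι V) (v₀ : V) : List V → Prop
  | [] => False
  | [v] => v = v₀
  | v :: w :: t => G.E w v ∧ IsHist G v₀ (w :: t)

/-- The current (i.e. most recent) vertex of a history. -/
def cur (v₀ : V) (h : List V) : V := h.headD v₀

/-- `σ` is a valid strategy of player `i`: on every history whose current
vertex belongs to player `i`, it chooses a successor along an edge. -/
def IsStrat (G : QRGame ι V) (v₀ : V) (i : ι) (σ : List V → V) : Prop :=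
  ∀ h : List V, G.IsHist v₀ h → G.owner (cur v₀ h) = i → G.E (cur v₀ h) (σ h)

/-- A strategy profile: one valid strategy for each player. -/
def IsProfile (G : QRGame ι V) (v₀ : V) (σ : ι → List V → V) : Prop :=
  ∀ i, G.IsStrat v₀ i (σ i)

/-- The history reached after `n` further steps when all players follow the
profile `σ` from the history `h` on. -/
def histFrom (G : QRGame ι V) (v₀ : V) (σ : ι → List V → V) (h : List V) : ℕ → List V
  | 0 => h
  | n + 1 =>
      σ (G.owner (cur v₀ (histFrom G v₀ σ h n))) (histFrom G v₀ σ h n)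
        :: histFrom G v₀ σ h n

/-- The full play (indexed from time `0`) whose prefix is the history `h` and
which is consistent with the profile `σ` after `h`. -/
def fullPlay (G : QRGame ι V) (v₀ : V) (σ : ι → List V → V) (h : List V) (t : ℕ) : V :=
  (G.histFrom v₀ σ h t).reverse.getD t v₀

/-- The outcome `⟨(σ_i)⟩_{v₀}` of the profile `σ` from the initial vertex. -/
def outcome (G : QRGame ι V) (v₀ : V) (σ : ι → List V → V) : ℕ → V :=
  G.fullPlay v₀ σ [v₀]

/-- Cost of player `i` for a play `ρ`: the least `l` with `ρ l ∈ F i`,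
and `⊤` (i.e. `+∞`) if there is no such `l`. -/
noncomputable def cost (G : QRGame ι V) (i : ι) (ρ : ℕ → V) : ℕ∞ :=
  ⨅ l ∈ {l : ℕ | ρ l ∈ G.F i}, (l : ℕ∞)

/-- Cost of player `i` for the finite prefix `ρ₀ … ρ_{m-1}` of a play. -/
noncomputable def costLT (G : QRGame ι V) (i : ι) (ρ : ℕ → V) (m : ℕ) : ℕ∞ :=
  ⨅ l ∈ {l : ℕ | l < m ∧ ρ l ∈ G.F i}, (l : ℕ∞)

end QRGame

/-- The preference relation `≺_j` of player `j` on cost profiles: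
`x ≺_j y` iff `x j > y j`, or `x j = y j`, every player's cost does not
decrease, and some player's cost strictly increases. -/
def Prec {ι : Type} (j : ι) (x y : ι → ℕ∞) : Prop :=
  y j < x j ∨ (x j = y j ∧ (∀ i, x i ≤ y i) ∧ ∃ i, x i < y i)

namespace QRGame

variable {ι V : Type} [DecidableEq ι]

/-- `σ` restricted after the history `h` is a secure equilibrium in the subgame
`(G|_h, cur h)`: no player `j` has a `≺_j`-profitable deviation after `h`
(costs are computed on the whole play, including the prefix `h`). -/
def IsSecureAfter (G : QRGame ι V) (v₀ : V) (σ : ι → List V → V) (h : List V) : Prop :=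
  ¬ ∃ (j : ι) (σ' : List V → V), G.IsStrat v₀ j σ' ∧
      Prec j (fun i => G.cost i (G.fullPlay v₀ σ h))
        (fun i => G.cost i (G.fullPlay v₀ (Function.update σ j σ') h))

/-- A secure equilibrium in `(G, v₀)`. -/
def IsSecure (G : QRGame ι V) (v₀ : V) (σ : ι → List V → V) : Prop :=
  G.IsSecureAfter v₀ σ [v₀]

/-- A subgame perfect secure equilibrium: a secure equilibrium in every subgame. -/
def IsSPSE (G : QRGame ι V) (v₀ : V) (σ : ι → List V → V) : Prop :=
  ∀ h : List V, G.IsHist v₀ h → G.IsSecureAfter v₀ σ h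

end QRGame

namespace QRGame

variable {ι V : Type} [Fintype V]

/-- A strategy profile with outcome `ρ` is goal-optimal (with bound `Γ`) if
every goal set visited by `ρ` is visited before depth `Γ`. -/
noncomputable def GoalOpt (G : QRGame ι V) (v₀ : V) (σ : ι → List V → V) (Γ : ℕ) : Prop :=
  ∀ i, G.cost i (G.outcome v₀ σ) ≠ ⊤ → G.cost i (G.outcome v₀ σ) < (Γ : ℕ∞)

/-- The bound `D = max{Cost_i(ρ) : Cost_i(ρ) < +∞} + |V|` attached to a play `ρ`. -/
noncomputable def devBound (G : QRGame ι V) (ρ : ℕ → V) : ℕ :=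
  (⨆ i ∈ {i : ι | G.cost i ρ ≠ ⊤}, G.cost i ρ).toNat + Fintype.card V

variable [DecidableEq ι]

/-- A secure equilibrium with outcome `ρ` is dev-optimal if for every player
`j` and deviation `σ'_j` (with resulting play `ρ'`), the cost profile of the
prefix `ρ_{<D}` is not `≺_j` the cost profile of the prefix `ρ'_{<D}`, where
`D = max{Cost_i(ρ) : Cost_i(ρ) < +∞} + |V|`. -/
noncomputable def DevOpt (G : QRGame ι V) (v₀ : V) (σ : ι → List V → V) : Prop :=
  ∀ (j : ι) (σ' : List V → V), G.IsStrat v₀ j σ' →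
    ¬ Prec j
        (fun i => G.costLT i (G.outcome v₀ σ) (G.devBound (G.outcome v₀ σ)))
        (fun i => G.costLT i (G.outcome v₀ (Function.update σ j σ'))
          (G.devBound (G.outcome v₀ σ)))

end QRGame

/-!
Let `ρ` be the outcome of `σ`, `M` the largest finite cost on `ρ`, and `D = M + |V|`. The
profile `punishProfile σ` plays like `σ` along `ρ` and on all histories of length at most `M`.
Once a history has left `ρ` through a move of player `j` and is longer than `M`, the other
players punish `j` positionally: from `punishRegion` they force, within `|V| - 1` steps, a
visit to the goal of some player whose cost on `ρ` is infinite, and when `j`'s own cost on `ρ`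
is infinite they keep the play outside the region from which `j` could force his goal.

Up to time `max (d + 1) M`, where `d` is the divergence point, the coalition's moves in a
deviation from this profile are those of `σ`, so `j` can replay the deviation against `σ` and
then continue with a positional escape strategy. Security of `σ` then shows that the deviator's
cost does not drop, and that a deviation keeping `j`'s cost, lowering no cost (as seen before
`D`) and raising some cost is in `punishRegion` at time `M`: otherwise the escaping replay
would be `≺_j`-profitable against `σ`. But from there a player with infinite cost on `ρ`
reaches his goal before `D`, lowering his cost. Security and dev-optimality both follow from
these two facts.
-/

namespace QRGame

variable {ι V : Type}

section Cost

variable (G : QRGame ι V) {ρ : ℕ → V} {i : ι}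

theorem cost_le_of_mem {l : ℕ} (h : ρ l ∈ G.F i) : G.cost i ρ ≤ l :=
  iInf₂_le l h

theorem le_cost_iff {n : ℕ∞} : n ≤ G.cost i ρ ↔ ∀ l : ℕ, (l : ℕ∞) < n → ρ l ∉ G.F i := by
  rw [cost, le_iInf₂_iff]
  exact forall_congr' fun _ => by rw [← not_imp_not, not_le]; rfl

theorem exists_cost_eq (h : G.cost i ρ ≠ ⊤) : ∃ c : ℕ, G.cost i ρ = c ∧ ρ c ∈ G.F i := by
  have hne : {l | ρ l ∈ G.F i}.Nonempty := by
    by_contra! hemp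
    exact h (top_le_iff.mp (G.le_cost_iff.mpr fun l _ hl => hemp.subset hl))
  exact ⟨sInf {l | ρ l ∈ G.F i}, (ENat.natCast_sInf hne).symm, Nat.sInf_mem hne⟩

theorem le_costLT_iff {m : ℕ} {n : ℕ∞} :
    n ≤ G.costLT i ρ m ↔ ∀ l : ℕ, l < m → (l : ℕ∞) < n → ρ l ∉ G.F i := by
  rw [costLT, le_iInf₂_iff]
  exact forall_congr' fun _ => by rw [← not_imp_not, not_le, Set.mem_ofPred_eq]; tauto

theorem costLT_le_iff {m n : ℕ} : G.costLT i ρ m ≤ n ↔ ∃ l, l < m ∧ l ≤ n ∧ ρ l ∈ G.F i := by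
  rw [← not_iff_not, not_le, ← ENat.add_one_le_iff (ENat.natCast_ne_top n), le_costLT_iff]
  push Not
  refine forall_congr' fun l => forall_congr' fun _ => ?_
  norm_cast
  rw [Nat.lt_add_one_iff]

theorem cost_le_costLT {m : ℕ} : G.cost i ρ ≤ G.costLT i ρ m :=
  G.le_costLT_iff.mpr fun l _ hl => G.le_cost_iff.mp le_rfl l hl

theorem costLT_eq_cost {m : ℕ} (h : G.cost i ρ ≠ ⊤ → G.cost i ρ < m) :
    G.costLT i ρ m = G.cost i ρ := by
  refine le_antisymm ?_ G.cost_le_costLT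
  by_cases htop : G.cost i ρ = ⊤
  · exact htop ▸ le_top
  · obtain ⟨c, hc, hcF⟩ := G.exists_cost_eq htop
    have hcm : c < m := by exact_mod_cast hc ▸ h htop
    exact hc ▸ G.costLT_le_iff.mpr ⟨c, hcm, le_rfl, hcF⟩

theorem prec_of_agree_prefix {ρ ρ' q : ℕ → V} {j i₀ : ι} {M D : ℕ}
    (hM : ∀ i, G.cost i ρ ≠ ⊤ → G.cost i ρ ≤ M) (hMD : M < D)
    (hj : G.costLT j ρ' D ≤ G.cost j ρ) (hle : ∀ i, G.cost i ρ ≤ G.costLT i ρ' D)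
    (hlt : G.cost i₀ ρ < G.costLT i₀ ρ' D) (hq : ∀ t ≤ M, q t = ρ' t)
    (hnew : ∀ i, G.cost i ρ = ⊤ → ∀ t, M < t → q t ∉ G.F i) :
    Prec j (fun i => G.cost i ρ) (fun i => G.cost i q) := by
  have key : ∀ i (n : ℕ∞), n ≤ G.costLT i ρ' D → (G.cost i ρ = ⊤ ∨ n ≤ M + 1) →
      n ≤ G.cost i q := by
    intro i n hn hi
    refine G.le_cost_iff.mpr fun l hl => ?_
    rcases le_or_gt l M with hlM | hlM
    · rw [hq l hlM]
      exact G.le_costLT_iff.mp hn l (by omega) hl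
    · refine hnew i (hi.resolve_right fun h => ?_) l hlM
      have : (l : ℕ∞) < M + 1 := hl.trans_le h
      norm_cast at this
      omega
  have hge : ∀ i, G.cost i ρ ≤ G.cost i q := fun i =>
    key i _ (hle i) ((em _).imp_right fun h => (hM i h).trans (by norm_cast; omega))
  refine Or.inr ⟨(hge j).antisymm ?_, hge, i₀, ?_⟩
  · rcases eq_or_ne (G.cost j ρ) ⊤ with htop | htop
    · exact htop ▸ le_top
    obtain ⟨c, hc, -⟩ := G.exists_cost_eq htop
    obtain ⟨l, -, hlc, hlF⟩ := G.costLT_le_iff.mp (hc ▸ hj)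
    have hcM : c ≤ M := by exact_mod_cast hc ▸ hM j htop
    rw [hc]
    exact (G.cost_le_of_mem (hq l (by omega) ▸ hlF)).trans (by exact_mod_cast hlc)
  · have hfin := hlt.ne_top
    refine (ENat.add_one_le_iff hfin).mp (key i₀ _ (Order.add_one_le_of_lt hlt) (Or.inr ?_))
    gcongr
    exact hM i₀ hfin

end Cost

def DivergesAt (p q : ℕ → V) (d : ℕ) : Prop :=
  (∀ s ≤ d, p s = q s) ∧ p (d + 1) ≠ q (d + 1)

theorem exists_divergesAt {p q : ℕ → V} (h₀ : p 0 = q 0) (hne : p ≠ q) :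
    ∃ d, DivergesAt p q d := by
  have hex : ∃ t, p t ≠ q t := Function.ne_iff.mp hne
  have hpos : Nat.find hex ≠ 0 := fun h => Nat.find_spec hex (h ▸ h₀)
  refine ⟨Nat.find hex - 1, fun s hs => ?_, ?_⟩
  · by_contra h
    exact absurd (Nat.find_min' hex h) (by omega)
  · rw [Nat.sub_add_cancel (Nat.one_le_iff_ne_zero.mpr hpos)]
    exact Nat.find_spec hex

section Hist

variable (G : QRGame ι V) (v₀ : V) (P Q : ι → List V → V)

def hist (t : ℕ) : List V := G.histFrom v₀ P [v₀] t

theorem hist_succ (t : ℕ) :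
    G.hist v₀ P (t + 1) = P (G.owner (cur v₀ (G.hist v₀ P t))) (G.hist v₀ P t) :: G.hist v₀ P t :=
  rfl

theorem length_hist (t : ℕ) : (G.hist v₀ P t).length = t + 1 := by
  induction t with
  | zero => rfl
  | succ t ih => rw [hist_succ, List.length_cons, ih]

theorem cur_hist : ∀ t, cur v₀ (G.hist v₀ P t) = G.outcome v₀ P t
  | 0 => rfl
  | t + 1 => by
    change _ = (G.hist v₀ P (t + 1)).reverse.getD (t + 1) v₀
    rw [hist_succ, List.reverse_cons,
      List.getD_append_right _ _ _ _ (by rw [List.length_reverse, length_hist])]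
    simp [cur, length_hist]

theorem outcome_succ (t : ℕ) :
    G.outcome v₀ P (t + 1) = P (G.owner (G.outcome v₀ P t)) (G.hist v₀ P t) := by
  rw [← cur_hist, ← cur_hist, hist_succ]
  rfl

theorem hist_succ' (t : ℕ) : G.hist v₀ P (t + 1) = G.outcome v₀ P (t + 1) :: G.hist v₀ P t := by
  rw [outcome_succ, ← cur_hist]
  rfl

theorem hist_suffix {s t : ℕ} (h : s ≤ t) : G.hist v₀ P s <:+ G.hist v₀ P t := by
  induction t, h using Nat.le_induction with
  | base => exact List.suffix_refl _
  | succ t _ ih => exact ih.trans (List.suffix_cons _ _)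

variable {P Q} in
theorem hist_eq_of_suffix {s t : ℕ} (hst : s ≤ t) (h : G.hist v₀ Q s <:+ G.hist v₀ P t) :
    G.hist v₀ Q s = G.hist v₀ P s :=
  (List.suffix_of_suffix_length_le h (G.hist_suffix v₀ P hst)
    (by rw [length_hist, length_hist])).eq_of_length (by rw [length_hist, length_hist])

theorem hist_eq_hist_iff {t : ℕ} :
    G.hist v₀ P t = G.hist v₀ Q t ↔ ∀ s ≤ t, G.outcome v₀ P s = G.outcome v₀ Q s := by
  refine ⟨fun h s hs => ?_, fun h => ?_⟩
  · rw [← cur_hist, ← cur_hist, G.hist_eq_of_suffix v₀ hs (h ▸ G.hist_suffix v₀ P hs)]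
  · induction t with
    | zero => rfl
    | succ t ih => rw [hist_succ', hist_succ', h (t + 1) le_rfl, ih fun s hs => h s (by omega)]

variable {G v₀ P}

theorem isHist_hist (hP : G.IsProfile v₀ P) : ∀ t, G.IsHist v₀ (G.hist v₀ P t)
  | 0 => rfl
  | t + 1 => by
    have ih := isHist_hist hP t
    have hedge : G.E (G.outcome v₀ P t) (G.outcome v₀ P (t + 1)) := by
      rw [outcome_succ, ← cur_hist]
      exact hP _ _ ih rfl
    rw [hist_succ']
    cases hl : G.hist v₀ P t with
    | nil => exact absurd (G.length_hist v₀ P t) (by simp [hl])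
    | cons v l =>
      have hv : v = G.outcome v₀ P t := by rw [← cur_hist, hl]; rfl
      exact ⟨hv ▸ hedge, hl ▸ ih⟩

theorem edge_outcome (hP : G.IsProfile v₀ P) (t : ℕ) :
    G.E (G.outcome v₀ P t) (G.outcome v₀ P (t + 1)) := by
  rw [outcome_succ, ← cur_hist]
  exact hP _ _ (isHist_hist hP t) rfl

variable [DecidableEq ι]

theorem IsProfile.update (hP : G.IsProfile v₀ P) {j : ι} {s : List V → V}
    (hs : G.IsStrat v₀ j s) : G.IsProfile v₀ (Function.update P j s) := by
  intro i
  rcases eq_or_ne i j with rfl | hij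
  · rwa [Function.update_self]
  · rw [Function.update_of_ne hij]
    exact hP i

theorem exists_strat_replaying {P' σ : ι → List V → V} {j : ι} {t₀ : ℕ} {ς : V → V}
    (hP' : G.IsProfile v₀ P') (hς : ∀ v, G.E v (ς v))
    (hσ : ∀ s < t₀, ∀ i ≠ j, P' i (G.hist v₀ P' s) = σ i (G.hist v₀ P' s)) :
    ∃ σ'', G.IsStrat v₀ j σ'' ∧
      (∀ t ≤ t₀, G.outcome v₀ (Function.update σ j σ'') t = G.outcome v₀ P' t) ∧
      ∀ t, t₀ ≤ t → G.owner (G.outcome v₀ (Function.update σ j σ'') t) = j →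
        G.outcome v₀ (Function.update σ j σ'') (t + 1)
          = ς (G.outcome v₀ (Function.update σ j σ'') t) := by
  let σ'' : List V → V := fun h =>
    if h.length ≤ t₀ ∧ h = G.hist v₀ P' (h.length - 1) then G.outcome v₀ P' h.length
    else ς (cur v₀ h)
  have hreplay : ∀ t < t₀, σ'' (G.hist v₀ P' t) = G.outcome v₀ P' (t + 1) := fun t ht => by
    simp only [σ'', length_hist, Nat.add_sub_cancel]
    exact if_pos ⟨ht, trivial⟩
  have hagree : ∀ t ≤ t₀, G.hist v₀ (Function.update σ j σ'') t = G.hist v₀ P' t := by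
    intro t ht
    induction t with
    | zero => rfl
    | succ t ih =>
      rw [hist_succ, ih (by omega), cur_hist, hist_succ', outcome_succ]
      congr 1
      rcases eq_or_ne (G.owner (G.outcome v₀ P' t)) j with hown | hown
      · rw [hown, Function.update_self, hreplay t (by omega), outcome_succ, hown]
      · rw [Function.update_of_ne hown, hσ t (by omega) _ hown]
  refine ⟨σ'', fun h _ _ => ?_, fun t ht => ?_, fun t ht hown => ?_⟩
  · by_cases hh : h.length ≤ t₀ ∧ h = G.hist v₀ P' (h.length - 1)
    · obtain ⟨n, hn⟩ : ∃ n, h.length - 1 = n := ⟨_, rfl⟩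
      rw [hn] at hh
      obtain ⟨hlen, rfl⟩ := hh
      rw [length_hist] at hlen
      rw [hreplay n (by omega), cur_hist]
      exact edge_outcome hP' n
    · simp only [σ'']
      rw [if_neg hh]
      exact hς _
  · rw [← cur_hist, hagree t ht, cur_hist]
  · rw [outcome_succ, hown, Function.update_self, ← cur_hist]
    exact if_neg fun h => by have := h.1; rw [length_hist] at this; omega

end Hist

section Attractor

variable (G : QRGame ι V)

noncomputable def moveInto (A : Set V) (v : V) : V :=
  if h : ∃ w, G.E v w ∧ w ∈ A then h.choose else (G.total v).choose

theorem moveInto_edge (A : Set V) (v : V) : G.E v (G.moveInto A v) := by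
  unfold moveInto
  split_ifs with h
  exacts [h.choose_spec.1, (G.total v).choose_spec]

theorem moveInto_mem {A : Set V} {v : V} (h : ∃ w, G.E v w ∧ w ∈ A) : G.moveInto A v ∈ A := by
  rw [moveInto, dif_pos h]
  exact h.choose_spec.2

variable (P : V → Prop) (C S : Set V)

def attrStep (X : Set V) : Set V :=
  X ∪ {v | v ∈ C ∧ ((P v ∧ ∃ w, G.E v w ∧ w ∈ X) ∨ (¬ P v ∧ ∀ w, G.E v w → w ∈ X))}

def attrN (n : ℕ) : Set V := (G.attrStep P C)^[n] (S ∩ C)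

def attr : Set V := ⋃ n, G.attrN P C S n

noncomputable def attrMove (v : V) : V :=
  G.moveInto {w | ∀ n, v ∈ G.attrN P C S (n + 1) → w ∈ G.attrN P C S n} v

theorem attrN_succ (n : ℕ) : G.attrN P C S (n + 1) = G.attrStep P C (G.attrN P C S n) :=
  Function.iterate_succ_apply' _ _ _

theorem attrN_mono : Monotone (G.attrN P C S) :=
  monotone_nat_of_le_succ fun n => by rw [attrN_succ]; exact Set.subset_union_left

theorem attrN_subset (n : ℕ) : G.attrN P C S n ⊆ C := by
  induction n with
  | zero => exact Set.inter_subset_right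
  | succ n ih =>
    rw [attrN_succ]
    exact Set.union_subset ih fun v hv => hv.1

theorem inter_subset_attr : S ∩ C ⊆ G.attr P C S :=
  Set.subset_iUnion (G.attrN P C S) 0

variable {P C S}

theorem mem_attr_of_controlled {v w : V} (hP : P v) (hC : v ∈ C) (hw : G.E v w)
    (hwA : w ∈ G.attr P C S) : v ∈ G.attr P C S := by
  obtain ⟨n, hn⟩ := Set.mem_iUnion.mp hwA
  refine Set.mem_iUnion.mpr ⟨n + 1, ?_⟩
  rw [attrN_succ]
  exact Or.inr ⟨hC, Or.inl ⟨hP, w, hw, hn⟩⟩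

theorem mem_attr_of_uncontrolled [Fintype V] {v : V} (hP : ¬ P v) (hC : v ∈ C)
    (hall : ∀ w, G.E v w → w ∈ G.attr P C S) : v ∈ G.attr P C S := by
  have hlevel : ∀ w, ∃ n, G.E v w → w ∈ G.attrN P C S n := fun w => by
    by_cases hw : G.E v w
    · exact (Set.mem_iUnion.mp (hall w hw)).imp fun _ hn _ => hn
    · exact ⟨0, fun h => absurd h hw⟩
  choose level hlevel using hlevel
  refine Set.mem_iUnion.mpr ⟨Finset.univ.sup level + 1, ?_⟩
  rw [attrN_succ]
  exact Or.inr ⟨hC, Or.inr ⟨hP, fun w hw =>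
    G.attrN_mono P C S (Finset.le_sup (Finset.mem_univ w)) (hlevel w hw)⟩⟩

theorem attrMove_mem {v : V} {n : ℕ} (hP : P v) (hv : v ∈ G.attrN P C S (n + 1))
    (hv' : v ∉ G.attrN P C S n) : G.attrMove P C S v ∈ G.attrN P C S n := by
  have hstep := hv
  rw [attrN_succ] at hstep
  obtain ⟨w, hw, hwn⟩ : ∃ w, G.E v w ∧ w ∈ G.attrN P C S n := by
    rcases hstep with h | ⟨-, ⟨-, h⟩ | ⟨h, -⟩⟩
    exacts [absurd h hv', h, absurd hP h]
  have hmove : G.attrMove P C S v ∈ {w | ∀ m, v ∈ G.attrN P C S (m + 1) → w ∈ G.attrN P C S m} := by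
    refine G.moveInto_mem ⟨w, hw, fun m hm => ?_⟩
    rcases le_or_gt n m with hnm | hmn
    · exact G.attrN_mono P C S hnm hwn
    · exact absurd (G.attrN_mono P C S hmn hm) hv'
  exact hmove n hv

theorem exists_mem_attrN_succ_not_mem {v : V} (hv : v ∈ G.attr P C S) (hvS : v ∉ S ∩ C) :
    ∃ n, v ∈ G.attrN P C S (n + 1) ∧ v ∉ G.attrN P C S n := by
  have hex := Set.mem_iUnion.mp hv
  obtain ⟨n, hn⟩ : ∃ n, Nat.find hex = n + 1 :=
    Nat.exists_eq_succ_of_ne_zero fun h => hvS (by have := Nat.find_spec hex; rwa [h] at this)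
  exact ⟨n, hn ▸ Nat.find_spec hex, Nat.find_min hex (by omega)⟩

theorem attrMove_mem_constraint {v : V} (hP : P v) (hv : v ∈ G.attr P C S) (hvS : v ∉ S ∩ C) :
    G.attrMove P C S v ∈ C :=
  let ⟨n, hn, hn'⟩ := G.exists_mem_attrN_succ_not_mem hv hvS
  G.attrN_subset P C S n (G.attrMove_mem hP hn hn')

theorem exists_mem_of_mem_attrN {p : ℕ → V} {t₀ : ℕ} (hedge : ∀ t, G.E (p t) (p (t + 1)))
    (hmove : ∀ t, t₀ ≤ t → P (p t) → p t ∈ G.attr P C S → p t ∉ S ∩ C →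
      p (t + 1) = G.attrMove P C S (p t))
    {n : ℕ} (hn : p t₀ ∈ G.attrN P C S n) : ∃ k ≤ n, p (t₀ + k) ∈ S ∩ C := by
  induction n generalizing t₀ with
  | zero => exact ⟨0, le_rfl, hn⟩
  | succ n ih =>
    by_cases hS : p t₀ ∈ S ∩ C
    · exact ⟨0, n.zero_le.trans n.le_succ, hS⟩
    by_cases hlow : p t₀ ∈ G.attrN P C S n
    · obtain ⟨k, hk, hkS⟩ := ih hmove hlow
      exact ⟨k, hk.trans n.le_succ, hkS⟩
    have hnext : p (t₀ + 1) ∈ G.attrN P C S n := by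
      by_cases hP : P (p t₀)
      · rw [hmove t₀ le_rfl hP (Set.mem_iUnion.mpr ⟨_, hn⟩) hS]
        exact G.attrMove_mem hP hn hlow
      · have hstep := hn
        rw [attrN_succ] at hstep
        rcases hstep with h | ⟨-, ⟨h, -⟩ | ⟨-, h⟩⟩
        exacts [absurd h hlow, absurd h hP, h _ (hedge t₀)]
    obtain ⟨k, hk, hkS⟩ := ih (fun t ht => hmove t (by omega)) hnext
    exact ⟨k + 1, by omega, by rwa [← add_assoc, add_right_comm]⟩

theorem nonempty_of_mem_attrN {v : V} {n : ℕ} (hv : v ∈ G.attrN P C S n) : (S ∩ C).Nonempty := by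
  induction n generalizing v with
  | zero => exact ⟨v, hv⟩
  | succ n ih =>
    rw [attrN_succ] at hv
    rcases hv with h | ⟨-, ⟨-, w, -, hw⟩ | ⟨-, hall⟩⟩
    · exact ih h
    · exact ih hw
    · exact ih (hall _ (G.total v).choose_spec)

theorem attr_eq_attrN_of_succ_eq {n : ℕ} (h : G.attrN P C S (n + 1) = G.attrN P C S n) :
    G.attr P C S = G.attrN P C S n := by
  have hstable : ∀ m, n ≤ m → G.attrN P C S m = G.attrN P C S n := fun m hm => by
    induction m, hm using Nat.le_induction with
    | base => rfl
    | succ m _ ih => rw [attrN_succ, ih, ← attrN_succ, h]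
  refine (Set.iUnion_subset fun m => ?_).antisymm (Set.subset_iUnion _ n)
  rcases le_total m n with hmn | hnm
  · exact G.attrN_mono P C S hmn
  · exact (hstable m hnm).le

theorem attr_subset_attrN_card [Fintype V] :
    G.attr P C S ⊆ G.attrN P C S (Fintype.card V - 1) := by
  intro v hv
  obtain ⟨m, hm⟩ := Set.mem_iUnion.mp hv
  have hgrow : ∀ n, G.attr P C S ⊆ G.attrN P C S n ∨ n + 1 ≤ (G.attrN P C S n).ncard := by
    intro n
    induction n with
    | zero => exact Or.inr ((Set.ncard_pos (Set.toFinite _)).mpr (G.nonempty_of_mem_attrN hm))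
    | succ n ih =>
      by_cases hstab : G.attrN P C S (n + 1) = G.attrN P C S n
      · exact Or.inl (G.attr_eq_attrN_of_succ_eq hstab ▸ hstab ▸ subset_rfl)
      rcases ih with ih | ih
      · exact Or.inl (ih.trans (G.attrN_mono P C S (Nat.le_add_right n 1)))
      · have hlt := Set.ncard_lt_ncard
          ((G.attrN_mono P C S (Nat.le_add_right n 1)).ssubset_of_ne (Ne.symm hstab))
        exact Or.inr (by omega)
  have hcard : 0 < Fintype.card V := Fintype.card_pos_iff.mpr ⟨v⟩
  rcases hgrow (Fintype.card V - 1) with h | h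
  · exact h hv
  · have huniv : G.attrN P C S (Fintype.card V - 1) = Set.univ :=
      Set.eq_of_subset_of_ncard_le (Set.subset_univ _)
        (by rw [Set.ncard_univ, Nat.card_eq_fintype_card]; omega)
    exact huniv ▸ Set.mem_univ v

end Attractor

section Regions

variable (G : QRGame ι V) (ρ : ℕ → V) (j : ι)

def unreachedGoals : Set V := {v | ∃ i, G.cost i ρ = ⊤ ∧ v ∈ G.F i}

def deviatorAttr : Set V := G.attr (fun v => G.owner v = j) Set.univ (G.F j)

def safeRegion : Set V := if G.cost j ρ = ⊤ then (G.deviatorAttr j)ᶜ else Set.univ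

def punishRegion : Set V :=
  G.attr (fun v => G.owner v ≠ j) (G.safeRegion ρ j) (G.unreachedGoals ρ)

noncomputable def punishMove (v : V) : V :=
  if v ∈ G.punishRegion ρ j \ (G.unreachedGoals ρ ∩ G.safeRegion ρ j) then
    G.attrMove (fun v => G.owner v ≠ j) (G.safeRegion ρ j) (G.unreachedGoals ρ) v
  else G.moveInto (G.safeRegion ρ j) v

noncomputable def escapeMove (v : V) : V :=
  if v ∈ G.safeRegion ρ j then G.moveInto (G.safeRegion ρ j \ G.punishRegion ρ j) v
  else G.attrMove (fun v => G.owner v = j) Set.univ (G.F j) v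

variable {G ρ j}

theorem safeRegion_of_cost_eq_top (h : G.cost j ρ = ⊤) :
    G.safeRegion ρ j = (G.deviatorAttr j)ᶜ :=
  if_pos h

theorem safeRegion_of_cost_ne_top (h : G.cost j ρ ≠ ⊤) : G.safeRegion ρ j = Set.univ :=
  if_neg h

theorem F_subset_deviatorAttr : G.F j ⊆ G.deviatorAttr j :=
  fun _ hv => G.inter_subset_attr _ _ _ ⟨hv, trivial⟩

variable {v w : V}

theorem mem_safeRegion_of_edge (hown : G.owner v = j) (hv : v ∈ G.safeRegion ρ j)
    (hw : G.E v w) : w ∈ G.safeRegion ρ j := by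
  by_cases htop : G.cost j ρ = ⊤
  · rw [safeRegion_of_cost_eq_top htop] at hv ⊢
    exact fun hwA => hv (G.mem_attr_of_controlled hown trivial hw hwA)
  · rw [safeRegion_of_cost_ne_top htop]
    trivial

theorem punishMove_edge (v : V) : G.E v (G.punishMove ρ j v) := by
  unfold punishMove
  split_ifs
  exacts [G.moveInto_edge _ v, G.moveInto_edge _ v]

theorem punishMove_eq_attrMove
    (hv : v ∈ G.punishRegion ρ j \ (G.unreachedGoals ρ ∩ G.safeRegion ρ j)) :
    G.punishMove ρ j v =
      G.attrMove (fun v => G.owner v ≠ j) (G.safeRegion ρ j) (G.unreachedGoals ρ) v :=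
  if_pos hv

theorem escapeMove_edge (v : V) : G.E v (G.escapeMove ρ j v) := by
  unfold escapeMove
  split_ifs
  exacts [G.moveInto_edge _ v, G.moveInto_edge _ v]

theorem escapeMove_eq_attrMove (hv : v ∉ G.safeRegion ρ j) :
    G.escapeMove ρ j v = G.attrMove (fun v => G.owner v = j) Set.univ (G.F j) v :=
  if_neg hv

variable [Fintype V]

theorem exists_edge_mem_safeRegion (hown : G.owner v ≠ j) (hv : v ∈ G.safeRegion ρ j) :
    ∃ w, G.E v w ∧ w ∈ G.safeRegion ρ j := by
  by_cases htop : G.cost j ρ = ⊤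
  · rw [safeRegion_of_cost_eq_top htop] at hv ⊢
    by_contra! hall
    exact hv (G.mem_attr_of_uncontrolled hown trivial fun w hw => not_not.mp (hall w hw))
  · rw [safeRegion_of_cost_ne_top htop]
    exact ⟨_, (G.total v).choose_spec, trivial⟩

theorem punishMove_mem_safeRegion (hown : G.owner v ≠ j) (hv : v ∈ G.safeRegion ρ j) :
    G.punishMove ρ j v ∈ G.safeRegion ρ j := by
  unfold punishMove
  split_ifs with h
  · exact G.attrMove_mem_constraint hown h.1 h.2
  · exact G.moveInto_mem (exists_edge_mem_safeRegion hown hv)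

theorem escapeMove_mem (hown : G.owner v = j)
    (hv : v ∈ G.safeRegion ρ j \ G.punishRegion ρ j) :
    G.escapeMove ρ j v ∈ G.safeRegion ρ j \ G.punishRegion ρ j := by
  rw [escapeMove, if_pos hv.1]
  refine G.moveInto_mem ?_
  by_contra! hall
  exact hv.2 (G.mem_attr_of_uncontrolled (not_not.mpr hown) hv.1 fun w hw =>
    not_not.mp fun hwW => hall w hw ⟨mem_safeRegion_of_edge hown hv.1 hw, hwW⟩)

end Regions

section MaxCost

variable (G : QRGame ι V) {ρ : ℕ → V} {i : ι}

noncomputable def maxFiniteCost (ρ : ℕ → V) : ℕ :=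
  (⨆ i ∈ {i : ι | G.cost i ρ ≠ ⊤}, G.cost i ρ).toNat

theorem cost_le_maxFiniteCost [Fintype ι] (h : G.cost i ρ ≠ ⊤) :
    G.cost i ρ ≤ G.maxFiniteCost ρ := by
  have hfin : (⨆ i ∈ {i : ι | G.cost i ρ ≠ ⊤}, G.cost i ρ) ≠ ⊤ :=
    ne_top_of_le_ne_top (ENat.natCast_ne_top (Finset.univ.sup fun i => (G.cost i ρ).toNat))
      (iSup₂_le fun i hi => (ENat.natCast_toNat hi).symm.le.trans
        (by exact_mod_cast Finset.le_sup (f := fun i => (G.cost i ρ).toNat) (Finset.mem_univ i)))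
  rw [maxFiniteCost, ENat.natCast_toNat hfin]
  exact le_iSup₂ (f := fun i (_ : i ∈ {i : ι | G.cost i ρ ≠ ⊤}) => G.cost i ρ) i h

theorem maxFiniteCost_lt_devBound [Fintype V] (ρ : ℕ → V) :
    G.maxFiniteCost ρ < G.devBound ρ :=
  Nat.lt_add_of_pos_right (Fintype.card_pos_iff.mpr ⟨ρ 0⟩)

theorem cost_lt_devBound [Fintype ι] [Fintype V] (h : G.cost i ρ ≠ ⊤) :
    G.cost i ρ < G.devBound ρ :=
  (G.cost_le_maxFiniteCost h).trans_lt (by exact_mod_cast G.maxFiniteCost_lt_devBound ρ)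

end MaxCost

section Profile

variable (G : QRGame ι V) (v₀ : V) (σ : ι → List V → V)

def onPath (h : List V) : Prop := h = G.hist v₀ σ (h.length - 1)

noncomputable def divergence (h : List V) : ℕ :=
  Nat.findGreatest (fun s => G.hist v₀ σ s <:+ h) (h.length - 1)

noncomputable def deviator (h : List V) : ι := G.owner (G.outcome v₀ σ (G.divergence v₀ σ h))

noncomputable def punishProfile : ι → List V → V := fun i h =>
  if G.onPath v₀ σ h ∨ h.length ≤ G.maxFiniteCost (G.outcome v₀ σ) ∨ i = G.deviator v₀ σ h then
    σ i h
  else G.punishMove (G.outcome v₀ σ) (G.deviator v₀ σ h) (cur v₀ h)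

variable {G v₀ σ}

theorem isProfile_punishProfile (hprof : G.IsProfile v₀ σ) :
    G.IsProfile v₀ (G.punishProfile v₀ σ) := by
  intro i h hh hown
  unfold punishProfile
  split_ifs
  exacts [hprof i h hh hown, G.punishMove_edge _]

theorem punishProfile_of_onPath_or_short {i : ι} {h : List V}
    (hh : G.onPath v₀ σ h ∨ h.length ≤ G.maxFiniteCost (G.outcome v₀ σ)) :
    G.punishProfile v₀ σ i h = σ i h :=
  if_pos (or_assoc.mp (Or.inl hh))

theorem onPath_hist_iff {P : ι → List V → V} {t : ℕ} :
    G.onPath v₀ σ (G.hist v₀ P t) ↔ ∀ s ≤ t, G.outcome v₀ P s = G.outcome v₀ σ s := by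
  rw [onPath, length_hist, Nat.add_sub_cancel]
  exact G.hist_eq_hist_iff v₀ P σ

theorem hist_punishProfile (t : ℕ) : G.hist v₀ (G.punishProfile v₀ σ) t = G.hist v₀ σ t := by
  induction t with
  | zero => rfl
  | succ t ih =>
    rw [hist_succ, hist_succ, ih,
      punishProfile_of_onPath_or_short (Or.inl (onPath_hist_iff.mpr fun _ _ => rfl))]

theorem outcome_punishProfile : G.outcome v₀ (G.punishProfile v₀ σ) = G.outcome v₀ σ :=
  funext fun t => by rw [← cur_hist, hist_punishProfile, cur_hist]

theorem punishProfile_hist_of_lt {P : ι → List V → V} {s : ℕ}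
    (hs : s < G.maxFiniteCost (G.outcome v₀ σ)) (i : ι) :
    G.punishProfile v₀ σ i (G.hist v₀ P s) = σ i (G.hist v₀ P s) :=
  punishProfile_of_onPath_or_short (Or.inr (by rw [length_hist]; omega))

theorem divergence_hist {P : ι → List V → V} {d t : ℕ}
    (hd : DivergesAt (G.outcome v₀ P) (G.outcome v₀ σ) d) (hdt : d < t) :
    G.divergence v₀ σ (G.hist v₀ P t) = d := by
  rw [divergence, length_hist, Nat.add_sub_cancel, Nat.findGreatest_eq_iff]
  refine ⟨hdt.le, fun _ => ?_, fun s hds hst hs => hd.2 ?_⟩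
  · rw [← (G.hist_eq_hist_iff v₀ P σ).mpr hd.1]
    exact G.hist_suffix v₀ P hdt.le
  · exact (G.hist_eq_hist_iff v₀ σ P).mp (G.hist_eq_of_suffix v₀ hst hs) (d + 1) hds |>.symm

end Profile

section Deviation

variable {G : QRGame ι V} {v₀ : V} {σ : ι → List V → V} [DecidableEq ι] {j : ι}
  {σ' : List V → V} {d : ℕ}

theorem owner_eq_of_divergesAt
    (hd : DivergesAt (G.outcome v₀ (Function.update (G.punishProfile v₀ σ) j σ'))
      (G.outcome v₀ σ) d) :
    G.owner (G.outcome v₀ σ d) = j := by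
  by_contra hown
  apply hd.2
  rw [outcome_succ, outcome_succ, hd.1 d le_rfl, Function.update_of_ne hown,
    (G.hist_eq_hist_iff v₀ _ σ).mpr hd.1,
    punishProfile_of_onPath_or_short (Or.inl (onPath_hist_iff.mpr fun _ _ => rfl))]

theorem deviation_eq_sigma_of_lt
    (hd : DivergesAt (G.outcome v₀ (Function.update (G.punishProfile v₀ σ) j σ'))
      (G.outcome v₀ σ) d) :
    ∀ s < max (d + 1) (G.maxFiniteCost (G.outcome v₀ σ)), ∀ i ≠ j,
      Function.update (G.punishProfile v₀ σ) j σ' i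
          (G.hist v₀ (Function.update (G.punishProfile v₀ σ) j σ') s) =
        σ i (G.hist v₀ (Function.update (G.punishProfile v₀ σ) j σ') s) := by
  intro s hs i hij
  rw [Function.update_of_ne hij]
  rcases lt_max_iff.mp hs with hs | hs
  · exact punishProfile_of_onPath_or_short
      (Or.inl (onPath_hist_iff.mpr fun r hr => hd.1 r (by omega)))
  · exact punishProfile_hist_of_lt hs i

theorem deviation_succ_eq_punishMove
    (hd : DivergesAt (G.outcome v₀ (Function.update (G.punishProfile v₀ σ) j σ'))
      (G.outcome v₀ σ) d) {t : ℕ} (hdt : d < t)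
    (hMt : G.maxFiniteCost (G.outcome v₀ σ) ≤ t)
    (hown : G.owner (G.outcome v₀ (Function.update (G.punishProfile v₀ σ) j σ') t) ≠ j) :
    G.outcome v₀ (Function.update (G.punishProfile v₀ σ) j σ') (t + 1) =
      G.punishMove (G.outcome v₀ σ) j
        (G.outcome v₀ (Function.update (G.punishProfile v₀ σ) j σ') t) := by
  have hdev : G.deviator v₀ σ (G.hist v₀ (Function.update (G.punishProfile v₀ σ) j σ') t) = j := by
    rw [deviator, divergence_hist hd hdt, owner_eq_of_divergesAt hd]
  rw [outcome_succ, Function.update_of_ne hown, punishProfile, if_neg, hdev, cur_hist]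
  rintro (hon | hshort | hdj)
  · exact hd.2 (onPath_hist_iff.mp hon (d + 1) hdt)
  · rw [length_hist] at hshort
    omega
  · exact hown (hdj.trans hdev)

end Deviation

section Security

variable [DecidableEq ι] {G : QRGame ι V} {v₀ : V} {σ : ι → List V → V} {j : ι}

theorem IsSecure.not_prec (hsec : G.IsSecure v₀ σ) {σ' : List V → V} (hσ' : G.IsStrat v₀ j σ') :
    ¬ Prec j (fun i => G.cost i (G.outcome v₀ σ))
      (fun i => G.cost i (G.outcome v₀ (Function.update σ j σ'))) :=
  fun h => hsec ⟨j, σ', hσ', h⟩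

theorem IsSecure.cost_le (hsec : G.IsSecure v₀ σ) {σ' : List V → V} (hσ' : G.IsStrat v₀ j σ') :
    G.cost j (G.outcome v₀ σ) ≤ G.cost j (G.outcome v₀ (Function.update σ j σ')) :=
  not_lt.mp fun h => hsec.not_prec hσ' (Or.inl h)

theorem forall_mem_safeRegion_of_escape (hprof : G.IsProfile v₀ σ) (hsec : G.IsSecure v₀ σ)
    {σ'' : List V → V} (hσ'' : G.IsStrat v₀ j σ'') {t₀ : ℕ}
    (hesc : ∀ t, t₀ ≤ t → G.owner (G.outcome v₀ (Function.update σ j σ'') t) = j →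
      G.outcome v₀ (Function.update σ j σ'') (t + 1) =
        G.escapeMove (G.outcome v₀ σ) j (G.outcome v₀ (Function.update σ j σ'') t)) :
    ∀ t, t₀ ≤ t → G.outcome v₀ (Function.update σ j σ'') t ∈ G.safeRegion (G.outcome v₀ σ) j := by
  intro t ht
  by_contra hout
  have htop : G.cost j (G.outcome v₀ σ) = ⊤ := by
    by_contra h
    exact hout (safeRegion_of_cost_ne_top h ▸ Set.mem_univ _)
  rw [safeRegion_of_cost_eq_top htop, Set.notMem_compl_iff] at hout
  obtain ⟨n, hn⟩ := Set.mem_iUnion.mp hout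
  obtain ⟨k, -, hk, -⟩ := G.exists_mem_of_mem_attrN
    (edge_outcome (hprof.update hσ''))
    (fun t' ht' hown hA _ => by
      rw [hesc t' (ht.trans ht') hown, escapeMove_eq_attrMove]
      rw [safeRegion_of_cost_eq_top htop, Set.notMem_compl_iff]
      exact hA) hn
  have := (hsec.cost_le hσ'').trans (G.cost_le_of_mem hk)
  rw [htop, top_le_iff] at this
  exact ENat.natCast_ne_top _ this

variable [Fintype ι] [Fintype V] {σ' : List V → V}

theorem cost_le_cost_deviation (hprof : G.IsProfile v₀ σ) (hsec : G.IsSecure v₀ σ)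
    (hσ' : G.IsStrat v₀ j σ') :
    G.cost j (G.outcome v₀ σ) ≤
      G.cost j (G.outcome v₀ (Function.update (G.punishProfile v₀ σ) j σ')) := by
  set ρ := G.outcome v₀ σ
  set Pd := Function.update (G.punishProfile v₀ σ) j σ'
  set M := G.maxFiniteCost ρ
  have hPd : G.IsProfile v₀ Pd := (isProfile_punishProfile hprof).update hσ'
  by_contra! hlt
  obtain ⟨d, hd⟩ := exists_divergesAt (p := G.outcome v₀ Pd) (q := ρ) rfl fun h => by
    rw [h] at hlt
    exact hlt.false
  obtain ⟨c, hc, hcF⟩ := G.exists_cost_eq hlt.ne_top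
  have hσ := deviation_eq_sigma_of_lt hd
  -- Before `max (d + 1) M` the coalition still plays `σ`, so replaying also reaches `F j` at `c`.
  by_cases hcT : c ≤ max (d + 1) M
  · obtain ⟨σ'', hσ'', hq, -⟩ :=
      exists_strat_replaying hPd (ς := G.escapeMove ρ j) escapeMove_edge
      fun s hs => hσ s (hs.trans_le hcT)
    have := (hsec.cost_le hσ'').trans (G.cost_le_of_mem (hq c le_rfl ▸ hcF))
    exact (this.trans_lt (hc ▸ hlt)).false
  -- Otherwise `j` improves on an infinite cost, and the punishment confines him to
  -- `safeRegion`, which avoids `F j`.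
  have htop : G.cost j ρ = ⊤ := by
    by_contra h
    have hcM : (c : ℕ∞) ≤ M := (hc ▸ hlt).le.trans (G.cost_le_maxFiniteCost h)
    norm_cast at hcM
    omega
  obtain ⟨σ'', hσ'', hq, hesc⟩ :=
    exists_strat_replaying hPd (ς := G.escapeMove ρ j) escapeMove_edge hσ
  have hsafe : ∀ t, max (d + 1) M ≤ t → G.outcome v₀ Pd t ∈ G.safeRegion ρ j := by
    intro t ht
    induction t, ht using Nat.le_induction with
    | base => exact hq _ le_rfl ▸ forall_mem_safeRegion_of_escape hprof hsec hσ'' hesc _ le_rfl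
    | succ t ht ih =>
      by_cases hown : G.owner (G.outcome v₀ Pd t) = j
      · exact mem_safeRegion_of_edge hown ih (edge_outcome hPd t)
      · rw [deviation_succ_eq_punishMove hd (le_of_max_le_left ht) (le_of_max_le_right ht) hown]
        exact punishMove_mem_safeRegion hown ih
  have := hsafe c (not_le.mp hcT).le
  rw [safeRegion_of_cost_eq_top htop] at this
  exact this (F_subset_deviatorAttr hcF)

theorem deviation_mem_punishRegion (hprof : G.IsProfile v₀ σ) (hsec : G.IsSecure v₀ σ)
    (hσ' : G.IsStrat v₀ j σ')
    (hj : G.costLT j (G.outcome v₀ (Function.update (G.punishProfile v₀ σ) j σ'))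
      (G.devBound (G.outcome v₀ σ)) ≤ G.cost j (G.outcome v₀ σ))
    (hle : ∀ i, G.cost i (G.outcome v₀ σ) ≤
      G.costLT i (G.outcome v₀ (Function.update (G.punishProfile v₀ σ) j σ'))
        (G.devBound (G.outcome v₀ σ)))
    (hlt : G.cost i₀ (G.outcome v₀ σ) <
      G.costLT i₀ (G.outcome v₀ (Function.update (G.punishProfile v₀ σ) j σ'))
        (G.devBound (G.outcome v₀ σ))) :
    G.outcome v₀ (Function.update (G.punishProfile v₀ σ) j σ') (G.maxFiniteCost (G.outcome v₀ σ))
      ∈ G.punishRegion (G.outcome v₀ σ) j := by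
  set ρ := G.outcome v₀ σ
  set Pd := Function.update (G.punishProfile v₀ σ) j σ'
  set M := G.maxFiniteCost ρ
  have hPd : G.IsProfile v₀ Pd := (isProfile_punishProfile hprof).update hσ'
  by_contra hout
  obtain ⟨σ'', hσ'', hq, hesc⟩ :=
    exists_strat_replaying hPd (σ := σ) (j := j) (t₀ := M) (ς := G.escapeMove ρ j)
    escapeMove_edge fun s hs i hij => by
      change Function.update (G.punishProfile v₀ σ) j σ' i _ = _
      rw [Function.update_of_ne hij]
      exact punishProfile_hist_of_lt hs i
  have hsafe := forall_mem_safeRegion_of_escape hprof hsec hσ'' hesc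
  have hfree : ∀ t, M ≤ t → G.outcome v₀ (Function.update σ j σ'') t ∉ G.punishRegion ρ j := by
    intro t ht
    induction t, ht using Nat.le_induction with
    | base => rwa [hq M le_rfl]
    | succ t ht ih =>
      by_cases hown : G.owner (G.outcome v₀ (Function.update σ j σ'') t) = j
      · rw [hesc t ht hown]
        exact (escapeMove_mem hown ⟨hsafe t ht, ih⟩).2
      · exact fun hW => ih (G.mem_attr_of_controlled hown (hsafe t ht)
          (edge_outcome (hprof.update hσ'') t) hW)
  refine hsec.not_prec hσ'' (G.prec_of_agree_prefix (fun i => G.cost_le_maxFiniteCost)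
    (G.maxFiniteCost_lt_devBound ρ) hj hle hlt hq fun i hi t ht hF => ?_)
  exact hfree t ht.le (G.inter_subset_attr _ _ _ ⟨⟨i, hi, hF⟩, hsafe t ht.le⟩)

theorem not_harm_deviation (hprof : G.IsProfile v₀ σ) (hsec : G.IsSecure v₀ σ)
    (hσ' : G.IsStrat v₀ j σ') :
    ¬ (G.cost j (G.outcome v₀ σ) =
        G.costLT j (G.outcome v₀ (Function.update (G.punishProfile v₀ σ) j σ'))
          (G.devBound (G.outcome v₀ σ)) ∧
      (∀ i, G.cost i (G.outcome v₀ σ) ≤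
        G.costLT i (G.outcome v₀ (Function.update (G.punishProfile v₀ σ) j σ'))
          (G.devBound (G.outcome v₀ σ))) ∧
      ∃ i, G.cost i (G.outcome v₀ σ) <
        G.costLT i (G.outcome v₀ (Function.update (G.punishProfile v₀ σ) j σ'))
          (G.devBound (G.outcome v₀ σ))) := by
  rintro ⟨hj, hle, i₀, hlt⟩
  set ρ := G.outcome v₀ σ
  set Pd := Function.update (G.punishProfile v₀ σ) j σ'
  set M := G.maxFiniteCost ρ
  have hPd : G.IsProfile v₀ Pd := (isProfile_punishProfile hprof).update hσ'
  have hD : G.devBound ρ = M + Fintype.card V := rfl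
  have hV : 0 < Fintype.card V := Fintype.card_pos_iff.mpr ⟨v₀⟩
  obtain ⟨c₀, hc₀, hc₀F⟩ := G.exists_cost_eq hlt.ne_top
  have hc₀M : c₀ ≤ M := by exact_mod_cast hc₀ ▸ G.cost_le_maxFiniteCost hlt.ne_top
  have hmiss : G.outcome v₀ Pd c₀ ∉ G.F i₀ :=
    G.le_costLT_iff.mp (Order.add_one_le_of_lt hlt) c₀ (by omega)
      (by rw [hc₀]; exact_mod_cast c₀.lt_succ_self)
  obtain ⟨d, hd⟩ := exists_divergesAt (p := G.outcome v₀ Pd) (q := ρ) rfl fun h =>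
    hmiss (h ▸ hc₀F)
  have hdM : d < M := by
    by_contra! h
    exact hmiss (hd.1 c₀ (by omega) ▸ hc₀F)
  have hW := deviation_mem_punishRegion hprof hsec hσ' hj.symm.le hle hlt
  obtain ⟨k, hk, ⟨a, ha, haF⟩, -⟩ := G.exists_mem_of_mem_attrN (edge_outcome hPd)
    (fun t ht hown hA hS => by
      rw [deviation_succ_eq_punishMove hd (hdM.trans_le ht) ht hown,
        punishMove_eq_attrMove ⟨hA, hS⟩])
    (G.attr_subset_attrN_card hW)
  have := (hle a).trans (G.costLT_le_iff.mpr ⟨M + k, by omega, le_rfl, haF⟩)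
  rw [ha, top_le_iff] at this
  exact ENat.natCast_ne_top _ this

theorem isSecure_punishProfile (hprof : G.IsProfile v₀ σ) (hsec : G.IsSecure v₀ σ) :
    G.IsSecure v₀ (G.punishProfile v₀ σ) := by
  rintro ⟨j, σ', hσ', hprec⟩
  change Prec j (fun i => G.cost i (G.outcome v₀ (G.punishProfile v₀ σ)))
    (fun i => G.cost i (G.outcome v₀ (Function.update (G.punishProfile v₀ σ) j σ'))) at hprec
  rw [outcome_punishProfile] at hprec
  rcases hprec with hlt | ⟨heq, hle, i₀, hlt⟩
  · exact (cost_le_cost_deviation hprof hsec hσ').not_gt hlt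
  · beta_reduce at heq hle hlt
    refine not_harm_deviation hprof hsec hσ'
      ⟨?_, fun i => (hle i).trans G.cost_le_costLT, i₀, hlt.trans_le G.cost_le_costLT⟩
    rw [heq]
    exact (G.costLT_eq_cost fun h => by rw [← heq] at h ⊢; exact G.cost_lt_devBound h).symm

theorem devOpt_punishProfile (hprof : G.IsProfile v₀ σ) (hsec : G.IsSecure v₀ σ) :
    G.DevOpt v₀ (G.punishProfile v₀ σ) := by
  intro j σ' hσ' hprec
  have hρ : (fun i => G.costLT i (G.outcome v₀ σ) (G.devBound (G.outcome v₀ σ))) =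
      fun i => G.cost i (G.outcome v₀ σ) :=
    funext fun i => G.costLT_eq_cost G.cost_lt_devBound
  rw [outcome_punishProfile, hρ] at hprec
  rcases hprec with hlt | hharm
  · exact (cost_le_cost_deviation hprof hsec hσ').not_gt (G.cost_le_costLT.trans_lt hlt)
  · exact not_harm_deviation hprof hsec hσ' hharm

end Security

end QRGame

/-- Lemma 5.5: every secure equilibrium can be transformed into a dev-optimal
secure equilibrium with the same outcome. -/
theorem exists_dev_optimal_secure_equilibrium_same_outcome
    {ι V : Type} [Fintype ι] [Fintype V] [DecidableEq ι]
    (G : QRGame ι V) (v₀ : V)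
    (σ : ι → List V → V) (hprof : G.IsProfile v₀ σ) (hsec : G.IsSecure v₀ σ) :
    ∃ τ : ι → List V → V, G.IsProfile v₀ τ ∧ G.IsSecure v₀ τ ∧
      G.DevOpt v₀ τ ∧ G.outcome v₀ τ = G.outcome v₀ σ :=
  ⟨G.punishProfile v₀ σ, QRGame.isProfile_punishProfile hprof,
    QRGame.isSecure_punishProfile hprof hsec, QRGame.devOpt_punishProfile hprof hsec,
    QRGame.outcome_punishProfile⟩
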